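/- If G and H are finite connected simple graphs, each with at least 2 vertices, then vv(G □ H) ≥ max{Δ(G)·n(H), Δ(H)·n(G)}, where □ denotes the Cartesian product of graphs. -/

import Mathlib

open SimpleGraph

variable {V : Type*}

/-- A walk `p` is a shortest path between its endpoints. -/
def SimpleGraph.IsShortestPath (G : SimpleGraph V) {x y : V} (p : G.Walk x y) : Prop :=
  p.IsPath ∧ p.length = G.dist x y

/-- `S` is an `x`-visibility set: `x ∉ S` and for every `y ∈ S` there is a shortest
`x,y`-path meeting `S` only in `y`. -/
def SimpleGraph.IsXVisSet (G : SimpleGraph V) (x : V) (S : Finset V) : Prop :=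
  x ∉ S ∧ ∀ y ∈ S, ∃ p : G.Walk x y, G.IsShortestPath p ∧
    ∀ z ∈ p.support, z ∈ S → z = y

/-- The `x`-visibility number `v_x(G)`: the maximum cardinality of an `x`-visibility set. -/
noncomputable def SimpleGraph.vx (G : SimpleGraph V) (x : V) : ℕ :=
  sSup {n | ∃ S : Finset V, G.IsXVisSet x S ∧ S.card = n}

/-- The vertex visibility number `vv(G)`: the maximum of `v_x(G)` over all vertices. -/
noncomputable def SimpleGraph.vv (G : SimpleGraph V) [Fintype V] : ℕ :=
  Finset.univ.sup fun x => G.vx x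

/-!
From a vertex `(g, h)` of `G □ H`, every vertex of `N(g) × V(H)` is visible: a shortest path to
`(g', h')` can run inside the fibre `{g} × V(H)`, which misses `N(g) × V(H)`, and then take the
edge `gg'`, because distances in `G □ H` are sums of the distances in the factors. Taking `g` of
maximum degree gives `vv(G □ H) ≥ Δ(G)·n(H)`, and `G □ H ≅ H □ G` gives the other bound.
-/

namespace SimpleGraph

section Iso

variable {V' : Type*} {G : SimpleGraph V} {G' : SimpleGraph V'}

lemma Hom.edist_apply_le (f : G →g G') (u v : V) : G'.edist (f u) (f v) ≤ G.edist u v := by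
  rw [edist_eq_sInf]
  exact le_sInf <| Set.forall_mem_range.2 fun p => (edist_le (p.map f)).trans_eq (by simp)

lemma Iso.edist_apply (e : G ≃g G') (u v : V) : G'.edist (e u) (e v) = G.edist u v := by
  refine le_antisymm (e.toHom.edist_apply_le u v) ?_
  simpa using e.symm.toHom.edist_apply_le (e u) (e v)

lemma Iso.dist_apply (e : G ≃g G') (u v : V) : G'.dist (e u) (e v) = G.dist u v := by
  rw [dist, dist, e.edist_apply]

lemma IsShortestPath.map_iso (e : G ≃g G') {x y : V} {p : G.Walk x y} (hp : G.IsShortestPath p) :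
    G'.IsShortestPath (p.map e.toHom) :=
  ⟨hp.1.map e.injective, by rw [Walk.length_map, hp.2]; exact (e.dist_apply x y).symm⟩

lemma IsXVisSet.map_iso (e : G ≃g G') {x : V} {S : Finset V} (hS : G.IsXVisSet x S) :
    G'.IsXVisSet (e x) (S.map e.toEquiv.toEmbedding) := by
  refine ⟨fun h => hS.1 ((Finset.mem_map' _).1 h), ?_⟩
  simp only [Finset.mem_map, Equiv.coe_toEmbedding, forall_exists_index, and_imp]
  rintro _ y hy rfl
  obtain ⟨p, hp, hpS⟩ := hS.2 y hy
  refine ⟨p.map e.toHom, hp.map_iso e, ?_⟩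
  simp only [Walk.support_map, List.mem_map, forall_exists_index, and_imp]
  rintro _ z hz rfl w hw hwz
  obtain rfl : w = z := e.injective hwz
  rw [hpS w hz hw]
  rfl

lemma IsXVisSet.card_le_vx [Finite V] {x : V} {S : Finset V} (hS : G.IsXVisSet x S) :
    S.card ≤ G.vx x := by
  have : Fintype V := Fintype.ofFinite V
  refine le_csSup ⟨Fintype.card V, ?_⟩ ⟨S, hS, rfl⟩
  rintro _ ⟨T, -, rfl⟩
  exact T.card_le_univ

lemma IsXVisSet.card_le_vv [Fintype V] {x : V} {S : Finset V} (hS : G.IsXVisSet x S) :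
    S.card ≤ G.vv :=
  hS.card_le_vx.trans (Finset.le_sup (f := G.vx) (Finset.mem_univ x))

lemma Iso.vx_le [Finite V'] (e : G ≃g G') (x : V) : G.vx x ≤ G'.vx (e x) := by
  refine csSup_le' ?_
  rintro _ ⟨S, hS, rfl⟩
  exact (S.card_map _).symm.le.trans (hS.map_iso e).card_le_vx

lemma Iso.vv_le [Fintype V] [Fintype V'] (e : G ≃g G') : G.vv ≤ G'.vv :=
  Finset.sup_le fun x _ => (e.vx_le x).trans (Finset.le_sup (f := G'.vx) (Finset.mem_univ (e x)))

end Iso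

section BoxProd

variable {W : Type*} {G : SimpleGraph V} {H : SimpleGraph W}

lemma dist_boxProd {x y : V × W} (hG : G.Reachable x.1 y.1) (hH : H.Reachable x.2 y.2) :
    (G □ H).dist x y = G.dist x.1 y.1 + H.dist x.2 y.2 := by
  rw [dist, edist_boxProd, ← hG.coe_dist_eq_edist, ← hH.coe_dist_eq_edist]
  rfl

lemma Walk.support_boxProdRight (g : V) {h h' : W} (q : H.Walk h h') :
    (q.boxProdRight G g).support = q.support.map (g, ·) :=
  Walk.support_map _ _

lemma Walk.length_boxProdRight (g : V) {h h' : W} (q : H.Walk h h') :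
    (q.boxProdRight G g).length = q.length :=
  Walk.length_map _ _

lemma Walk.IsPath.boxProdRight (g : V) {h h' : W} {q : H.Walk h h'} (hq : q.IsPath) :
    (q.boxProdRight G g).IsPath :=
  hq.map (G.boxProdRight H g).injective

lemma isXVisSet_neighborFinset_product_univ [Fintype V] [Fintype W] [DecidableRel G.Adj]
    (hH : H.Connected) (g : V) (h : W) :
    (G □ H).IsXVisSet (g, h) (G.neighborFinset g ×ˢ Finset.univ) := by
  refine ⟨by simp, ?_⟩
  rintro ⟨g', h'⟩ hy
  have hgg' : G.Adj g g' := by simpa using hy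
  obtain ⟨q, hq, hq_len⟩ := hH.exists_path_of_dist h h'
  have hfiber : ∀ z ∈ (q.boxProdRight G g).support, z ∉ G.neighborFinset g ×ˢ Finset.univ := by
    simp only [Walk.support_boxProdRight, List.mem_map]
    rintro _ ⟨_, _, rfl⟩ hzS
    simp at hzS
  refine ⟨(q.boxProdRight G g).concat (boxProd_adj_left.2 hgg'), ⟨?_, ?_⟩, ?_⟩
  · exact (hq.boxProdRight g).concat (fun hy' => hfiber _ hy' hy) _
  · rw [Walk.length_concat, Walk.length_boxProdRight, hq_len,
      dist_boxProd hgg'.reachable (hH.preconnected h h'), dist_eq_one_iff_adj.2 hgg']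
    simp [add_comm]
  · intro z hz hzS
    rw [Walk.support_concat, List.mem_append, List.mem_singleton] at hz
    exact hz.resolve_left fun hz' => hfiber z hz' hzS

lemma maxDegree_mul_card_le_vv_boxProd [Fintype V] [Fintype W] [DecidableRel G.Adj]
    (hH : H.Connected) : G.maxDegree * Fintype.card W ≤ (G □ H).vv := by
  rcases isEmpty_or_nonempty V with hV | hV
  · simp [maxDegree]
  obtain ⟨g, hg⟩ := G.exists_maximal_degree_vertex
  obtain ⟨h⟩ := hH.nonempty
  have := (isXVisSet_neighborFinset_product_univ (G := G) hH g h).card_le_vv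
  rwa [Finset.card_product, card_neighborFinset_eq_degree, ← hg, Finset.card_univ] at this

end BoxProd

end SimpleGraph

theorem stmt_13_general {W : Type*} [Fintype V] [Fintype W]
    (G : SimpleGraph V) (H : SimpleGraph W)
    [DecidableRel G.Adj] [DecidableRel H.Adj]
    (hG : G.Connected) (hH : H.Connected) :
    max (G.maxDegree * Fintype.card W) (H.maxDegree * Fintype.card V)
      ≤ (G.boxProd H).vv :=
  max_le (maxDegree_mul_card_le_vv_boxProd (G := G) hH)
    ((maxDegree_mul_card_le_vv_boxProd (G := H) hG).trans (boxProdComm H G).vv_le)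

/-- vv(G □ H) ≥ max{Δ(G)·n(H), Δ(H)·n(G)}. -/
theorem stmt_13 {W : Type*} [Fintype V] [Fintype W]
    (G : SimpleGraph V) (H : SimpleGraph W)
    [DecidableRel G.Adj] [DecidableRel H.Adj]
    (hG : G.Connected) (hH : H.Connected)
    (hV : 2 ≤ Fintype.card V) (hW : 2 ≤ Fintype.card W) :
    max (G.maxDegree * Fintype.card W) (H.maxDegree * Fintype.card V)
      ≤ (G.boxProd H).vv :=
  stmt_13_general G H hG hH
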